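/- Let K be a field and let q ∈ K be nonzero. For every integer k ≥ 0, T_k(q^{−1}, q) = (−1)^k · q^{k^2}. -/

import Mathlib

/-- The polynomials `T_k(t,q)` defined by `T_0 = 1` and, for `k ≥ 1`,
`T_k = T_{k-1} + (1+t)(-q)^{k²} + (1-t²) ∑_{i=1}^{k-1} (-q)^{k²-i²} T_{i-1}`
(below the sum is reindexed by `i ↦ i+1`). -/
def T {R : Type*} [CommRing R] (t q : R) : ℕ → R
  | 0 => 1
  | (k+1) => T t q k + (1 + t) * (-q) ^ ((k+1)^2) +
      (1 - t^2) * ∑ i ∈ (Finset.range k).attach,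
        (-q) ^ ((k+1)^2 - (i.1+1)^2) * T t q i.1
decreasing_by
  · exact Nat.lt_succ_self k
  · exact Nat.lt_succ_of_lt (Finset.mem_range.mp i.2)

/-- `f n h` with `f 0 0 = 1`, `f 0 h = 0` for `h ≥ 1`, `f n h = 0` for `h < 0`, and
`f n h = (1-q^h) f (n-1) (h-1) + (1-t q^{h+1}) f (n-1) (h+1)`; at `h = 0` the first
term vanishes since `1 - q^0 = 0`. -/
def f {R : Type*} [CommRing R] (t q : R) : ℕ → ℕ → R
  | 0, h => if h = 0 then 1 else 0
  | (n+1), 0 => (1 - t * q) * f t q n 1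
  | (n+1), (h+1) => (1 - q^(h+1)) * f t q n h + (1 - t * q^(h+2)) * f t q n (h+2)

/-- `Ẽ_n(t,q) = f(2n,0)`, which is `(1-q)^{2n}` times the `(t,q)`-Euler number. -/
def Etilde {R : Type*} [CommRing R] (t q : R) (n : ℕ) : R := f t q (2*n) 0

/-- Binomial coefficient with integer lower index, `0` when the lower index is negative. -/
def binom (n : ℕ) (m : ℤ) : ℤ := if 0 ≤ m then (n.choose m.toNat : ℤ) else 0

/-- q-Pochhammer symbol `(a;q)_n = ∏_{j=0}^{n-1} (1 - a q^j)`. -/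
def qPoch {K : Type*} [CommRing K] (a q : K) (n : ℕ) : K :=
  ∏ j ∈ Finset.range n, (1 - a * q ^ j)

/-- Gaussian binomial coefficient `[n choose k]_q = (q;q)_n / ((q;q)_k (q;q)_{n-k})`,
equal to `0` whenever `k < 0` or `k > n`. -/
def gauss {K : Type*} [Field K] (q : K) (n k : ℤ) : K :=
  if 0 ≤ k ∧ k ≤ n then
    qPoch q q n.toNat / (qPoch q q k.toNat * qPoch q q (n - k).toNat)
  else 0

/-- Number of distinct (positive) part sizes of the partition encoded by an
antitone function `Fin m → Fin (n+1)`. -/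
def distCard {m n : ℕ} (g : Fin m → Fin (n+1)) : ℕ :=
  ((Finset.univ.image fun i => ((g i : ℕ))).erase 0).card

/-- `∑_{λ ⊆ B(m,n)} x^{dist(λ)} q^{|λ|}`: partitions in the `m × n` box are encoded
as antitone functions `Fin m → Fin (n+1)`. -/
def boxSum {R : Type*} [CommRing R] (x q : R) (m n : ℕ) : R :=
  ∑ g ∈ Finset.univ.filter (fun g : Fin m → Fin (n+1) => ∀ i j : Fin m, i ≤ j → g j ≤ g i),
    x ^ distCard g * q ^ (∑ i, (g i : ℕ))

/-!
Since `q⁻¹ * q = 1`, it suffices to show `T_k(t, q) = (-q)^{k²}` whenever `t q = 1`. By strong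
induction, the `i`-th summand of the recursion for `T_{k+1}` becomes `(-q)^{k²} q^{2(k-i)}`, and as
`(1 - t²) q² = q² - 1`, the sum `(1 - t²) ∑_{i<k} q^{2(k-i)}` is the geometric sum `q^{2k} - 1`.
Hence `T_{k+1} = (-q)^{k²} (q^{2k} - (1 + t) q^{2k+1}) = -(-q)^{k²} q^{2k+1} = (-q)^{(k+1)²}`.
-/

open Finset

theorem neg_one_pow_sq_eq_neg_one_pow {R : Type*} [Monoid R] [HasDistribNeg R] (k : ℕ) :
    (-1 : R) ^ (k ^ 2) = (-1) ^ k := by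
  rcases Nat.even_or_odd k with h | h
  · rw [h.neg_one_pow, (h.pow_of_ne_zero two_ne_zero).neg_one_pow]
  · rw [h.neg_one_pow, h.pow.neg_one_pow]

theorem T_succ {R : Type*} [CommRing R] (t q : R) (k : ℕ) :
    T t q (k + 1) = T t q k + (1 + t) * (-q) ^ ((k + 1) ^ 2) +
      (1 - t ^ 2) * ∑ i ∈ range k, (-q) ^ ((k + 1) ^ 2 - (i + 1) ^ 2) * T t q i := by
  rw [T, sum_attach (range k) fun i => (-q) ^ ((k + 1) ^ 2 - (i + 1) ^ 2) * T t q i]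

theorem succ_sq_sub_succ_sq_add_sq {i k : ℕ} (h : i < k) :
    (k + 1) ^ 2 - (i + 1) ^ 2 + i ^ 2 = k ^ 2 + 2 * (k - 1 - i) + 2 := by
  have : (i + 1) ^ 2 ≤ (k + 1) ^ 2 := Nat.pow_le_pow_left (by omega) 2
  zify [h.le, this, show i ≤ k - 1 by omega, show 1 ≤ k by omega]
  ring

theorem T_eq_neg_pow_sq_of_mul_eq_one {R : Type*} [CommRing R] {t q : R} (h : t * q = 1)
    (k : ℕ) : T t q k = (-q) ^ (k ^ 2) := by
  induction k using Nat.strong_induction_on with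
  | _ k ih =>
  cases k with
  | zero => simp [T]
  | succ k =>
    have hsum : ∑ i ∈ range k, (-q) ^ ((k + 1) ^ 2 - (i + 1) ^ 2) * T t q i
        = (-q) ^ (k ^ 2) * q ^ 2 * ∑ i ∈ range k, (q ^ 2) ^ i := by
      rw [← sum_range_reflect (fun i => (q ^ 2) ^ i), mul_sum]
      refine sum_congr rfl fun i hi => ?_
      have hik : i < k := mem_range.mp hi
      rw [ih i (by omega), ← pow_add, succ_sq_sub_succ_sq_add_sq hik, pow_add, pow_add,
        pow_mul, neg_sq]
      ring
    have hsq : (-q) ^ ((k + 1) ^ 2) = (-q) ^ (k ^ 2) * -((q ^ 2) ^ k * q) := by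
      rw [show (k + 1) ^ 2 = k ^ 2 + 2 * k + 1 by ring, pow_add, pow_add, pow_one, pow_mul,
        neg_sq]
      ring
    rw [T_succ, ih k k.lt_succ_self, hsum, hsq]
    set a := (-q) ^ (k ^ 2)
    set S := ∑ i ∈ range k, (q ^ 2) ^ i
    linear_combination (-a * (q ^ 2) ^ k - a * S * (t * q + 1)) * h + a * geom_sum_mul (q ^ 2) k

theorem stmt_11 {K : Type*} [Field K] (q : K) (hq : q ≠ 0) (k : ℕ) :
    T q⁻¹ q k = (-1)^k * q^(k^2) := by
  rw [T_eq_neg_pow_sq_of_mul_eq_one (inv_mul_cancel₀ hq), neg_pow, neg_one_pow_sq_eq_neg_one_pow]
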